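/- arXiv:0704.1036 — 2 statements merged into one kernel-verified Lean document; each statement's English description precedes it below -/
import Mathlib

section
/- Let Δ ⊂ ℝⁿ be a Delzant polytope and let v be a vertex of Δ with edges e_v^1, …, e_v^n emanating from v. Then r_v = min{length_ℚ(e_v^1), …, length_ℚ(e_v^n)}, i.e., the maximal radius of an admissible simplex centered at v equals the minimum of the rational lengths of the edges of Δ meeting v. -/
open Set MeasureTheory Pointwise

noncomputable section

/-- Points of `ℝⁿ`. -/
abbrev Pt (n : ℕ) := Fin n → ℝ

/-- Cast an integer vector to a real point. -/
def ivec {n : ℕ} (u : Fin n → ℤ) : Pt n := fun j => (u j : ℝ)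

/-- `f` is an affine transformation of `ℝⁿ` whose linear part lies in `GL(n, ℤ)`. -/
def IsAGLZ {n : ℕ} (f : Pt n → Pt n) : Prop :=
  ∃ (A : Matrix (Fin n) (Fin n) ℤ) (b : Pt n),
    IsUnit A.det ∧ ∀ x : Pt n, ∀ i, f x i = (∑ j, (A i j : ℝ) * x j) + b i

/-- The `i`-th standard basis vector of `ℝⁿ`. -/
def stdVec {n : ℕ} (i : Fin n) : Pt n := fun j => if j = i then 1 else 0

/-- The half-open model simplex `Δ(r^{1/2})`: the convex hull of `0, r•e₁, …, r•eₙ`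
with the convex hull of `r•e₁, …, r•eₙ` (the facet not containing the origin) removed. -/
def modelSimplex (n : ℕ) (r : ℝ) : Set (Pt n) :=
  convexHull ℝ (insert 0 (Set.range fun i : Fin n => r • stdVec i)) \
    convexHull ℝ (Set.range fun i : Fin n => r • stdVec i)

/-- `e` is an edge of the convex polytope `Δ`: a one-dimensional face, i.e. a nondegenerate
segment which is an extreme subset of `Δ`. -/
def IsEdge {n : ℕ} (Δ e : Set (Pt n)) : Prop :=
  ∃ v w : Pt n, v ≠ w ∧ e = segment ℝ v w ∧ IsExtreme ℝ Δ e

/-- `Δ ⊆ ℝⁿ` is a Delzant polytope: a compact convex polytope (compact convex set with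
finitely many extreme points) of full dimension `n`, such that at every vertex `v` the edges
emanating from `v` are exactly `n` segments of the form `[v, v + tᵢ • uᵢ]` with `tᵢ > 0` and
`u₁, …, uₙ` a `ℤ`-basis of `ℤⁿ`. -/
def IsDelzant {n : ℕ} (Δ : Set (Pt n)) : Prop :=
  IsCompact Δ ∧ Convex ℝ Δ ∧ (interior Δ).Nonempty ∧
  (Set.extremePoints ℝ Δ).Finite ∧ (Set.extremePoints ℝ Δ).Nonempty ∧
  ∀ v ∈ Set.extremePoints ℝ Δ,
    ∃ (u : Fin n → Fin n → ℤ) (t : Fin n → ℝ),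
      IsUnit (Matrix.det (Matrix.of u)) ∧ (∀ i, 0 < t i) ∧
      (∀ i, IsEdge Δ (segment ℝ v (v + t i • ivec (u i)))) ∧
      ∀ e, IsEdge Δ e → v ∈ e → ∃ i, e = segment ℝ v (v + t i • ivec (u i))

/-- `S ⊆ Δ` is an admissible simplex of radius `r` with center the vertex `v`: the image of
the model simplex `Δ(r^{1/2})` under an element of `AGL(n, ℤ)` taking the origin to `v` and
the edges of the model simplex at the origin into the edges of `Δ` meeting `v`. -/
def IsAdmissibleSimplex {n : ℕ} (Δ : Set (Pt n)) (v : Pt n) (r : ℝ)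
    (S : Set (Pt n)) : Prop :=
  0 < r ∧ S ⊆ Δ ∧
  ∃ f : Pt n → Pt n, IsAGLZ f ∧ f 0 = v ∧
    (∀ i : Fin n, ∃ e, IsEdge Δ e ∧ v ∈ e ∧ f '' segment ℝ 0 (r • stdVec i) ⊆ e) ∧
    S = f '' modelSimplex n r

/-- `r_v`: the maximal radius of an admissible simplex with center `v`. -/
def maxRadius {n : ℕ} (Δ : Set (Pt n)) (v : Pt n) : ℝ :=
  sSup {r : ℝ | ∃ S, IsAdmissibleSimplex Δ v r S}

/-- `P` is an admissible packing of `Δ`: a disjoint union of admissible simplices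
(of possibly varying radii) contained in `Δ`. -/
def IsAdmissiblePacking {n : ℕ} (Δ P : Set (Pt n)) : Prop :=
  ∃ 𝒮 : Set (Set (Pt n)),
    (∀ S ∈ 𝒮, ∃ v ∈ Set.extremePoints ℝ Δ, ∃ r : ℝ, IsAdmissibleSimplex Δ v r S) ∧
    𝒮.PairwiseDisjoint id ∧ P = ⋃₀ 𝒮

/-- The density `vol(P)/vol(Δ)` of a packing `P` of `Δ` (Euclidean volume). -/
def packDensity {n : ℕ} (Δ P : Set (Pt n)) : ℝ := (volume P).toReal / (volume Δ).toReal

/-- The maximal density `Ω(Δ)` of admissible packings of `Δ`. -/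
def maxDensity {n : ℕ} (Δ : Set (Pt n)) : ℝ :=
  sSup {d : ℝ | ∃ P, IsAdmissiblePacking Δ P ∧ d = packDensity Δ P}

/-- Two Delzant polytopes are equivalent if a positive rescaling of the first lies in the
`AGL(n, ℤ)`-orbit of the second. -/
def DelzantEquiv {n : ℕ} (Δ₁ Δ₂ : Set (Pt n)) : Prop :=
  ∃ (c : ℝ) (f : Pt n → Pt n), 0 < c ∧ IsAGLZ f ∧ f '' (c • Δ₁) = Δ₂

/-- The rational (`SL(n,ℤ)`-) length of the segment from `v` to `w`: the largest `t > 0`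
such that `w = v + t • u` for an integer vector `u`. -/
def ratLength {n : ℕ} (v w : Pt n) : ℝ :=
  sSup {t : ℝ | 0 < t ∧ ∃ u : Fin n → ℤ, w = v + t • ivec u}

/-!
At a vertex `v` the edges are `[v, v + tᵢ uᵢ]` with `(uᵢ)` a `ℤ`-basis, so their rational
lengths are the `tᵢ`. For `0 < r ≤ min tᵢ` the map `x ↦ v + ∑ xᵢ uᵢ` carries `Δ(r^{1/2})` into the
convex hull of `v` and the points `v + r uᵢ`, hence into `Δ`. Conversely, an admissible simplex of
radius `r` sends `r eᵢ` onto an edge `[v, v + t_{σ i} u_{σ i}]`, which makes the `i`-th column of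
its linear part a positive integer multiple of `u_{σ i}` and gives `r ≤ t_{σ i}`; as the linear
part is unimodular, `σ` is a permutation. So the admissible radii are `(0, min tᵢ]`. For `n = 0`
this set is `(0, ∞)`, and both sides of the theorem are the junk value `0`.
-/

open scoped Matrix

theorem segment_add_smul_subset {E : Type*} [AddCommGroup E] [Module ℝ E] (v u : E) {r t : ℝ}
    (hr : 0 ≤ r) (hrt : r ≤ t) : segment ℝ v (v + r • u) ⊆ segment ℝ v (v + t • u) := by
  refine (convex_segment _ _).segment_subset (left_mem_segment ℝ _ _) ?_
  rcases hr.eq_or_lt with rfl | hr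
  · simpa using left_mem_segment ℝ v (v + t • u)
  refine ⟨1 - r / t, r / t, by linarith [div_le_one_of_le₀ hrt (hr.trans_le hrt).le],
    div_nonneg hr.le (hr.trans_le hrt).le, by ring, ?_⟩
  rw [smul_add, smul_smul, div_mul_cancel₀ r (hr.trans_le hrt).ne', ← add_assoc, ← add_smul,
    sub_add_cancel, one_smul]

theorem eq_of_segment_eq_segment {E : Type*} [AddCommGroup E] [Module ℝ E] {x y z : E}
    (h : segment ℝ x y = segment ℝ x z) : y = z :=
  (wbtw_swap_right_iff ℝ x).1
    ⟨mem_segment_iff_wbtw.1 (h ▸ right_mem_segment ℝ x y),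
      mem_segment_iff_wbtw.1 (h ▸ right_mem_segment ℝ x z)⟩

theorem Matrix.eq_of_col_eq_smul_of_col_eq_smul {ι R : Type*} [Fintype ι] [DecidableEq ι]
    [CommRing R] [IsDomain R] {A : Matrix ι ι R} (hA : IsUnit A.det) {i₁ i₂ : ι} {w : ι → R}
    {a b : R} (ha : a ≠ 0) (h₁ : Aᵀ i₁ = a • w) (h₂ : Aᵀ i₂ = b • w) : i₁ = i₂ := by
  by_contra hne
  have hinv (i : ι) : ∑ k, A⁻¹ i₂ k * A k i = if i₂ = i then 1 else 0 := by
    simpa [Matrix.mul_apply, Matrix.one_apply] using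
      congrFun (congrFun (Matrix.nonsing_inv_mul A hA) i₂) i
  have hcol (i : ι) (c : R) (h : Aᵀ i = c • w) :
      ∑ k, A⁻¹ i₂ k * A k i = c * ∑ k, A⁻¹ i₂ k * w k := by
    rw [Finset.mul_sum]
    refine Finset.sum_congr rfl fun k _ => ?_
    have hk : A k i = c * w k := by simpa using congrFun h k
    rw [hk]
    ring
  have h0 := (hcol i₁ a h₁).symm.trans (hinv i₁)
  have h1 := (hcol i₂ b h₂).symm.trans (hinv i₂)
  rw [if_neg (Ne.symm hne), mul_eq_zero] at h0
  rw [if_pos rfl, h0.resolve_left ha, mul_zero] at h1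
  exact zero_ne_one h1

theorem exists_int_eq_of_smul_row {n : ℕ} {u : Fin n → Fin n → ℤ}
    (hu : IsUnit (Matrix.of u).det) {j : Fin n} {c : ℝ} {a : Fin n → ℤ}
    (h : c • ivec (u j) = ivec a) : ∃ m : ℤ, c = m := by
  have hrow : ∑ k, u j k * (Matrix.of u)⁻¹ k j = 1 := by
    simpa [Matrix.mul_apply] using congrFun (congrFun (Matrix.mul_nonsing_inv _ hu) j) j
  have hk (k : Fin n) : c * u j k = a k := by simpa [ivec] using congrFun h k
  refine ⟨∑ k, a k * (Matrix.of u)⁻¹ k j, ?_⟩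
  calc c = c * ((∑ k, u j k * (Matrix.of u)⁻¹ k j : ℤ) : ℝ) := by rw [hrow, Int.cast_one, mul_one]
    _ = _ := by push_cast; simp_rw [Finset.mul_sum, ← mul_assoc, hk]

theorem ratLength_add_smul_row {n : ℕ} {u : Fin n → Fin n → ℤ}
    (hu : IsUnit (Matrix.of u).det) (j : Fin n) (v : Pt n) {t : ℝ} (ht : 0 < t) :
    ratLength v (v + t • ivec (u j)) = t := by
  refine IsGreatest.csSup_eq ⟨⟨ht, u j, rfl⟩, ?_⟩
  rintro s ⟨hs, w, hw⟩
  have hsmul : (t / s) • ivec (u j) = ivec w := by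
    rw [div_eq_inv_mul, mul_smul, add_left_cancel hw, smul_smul, inv_mul_cancel₀ hs.ne', one_smul]
  obtain ⟨m, hm⟩ := exists_int_eq_of_smul_row hu hsmul
  have hm1 : (1 : ℝ) ≤ m := by
    exact_mod_cast Int.cast_pos.mp (hm ▸ div_pos ht hs : (0 : ℝ) < m)
  calc s ≤ s * m := le_mul_of_one_le_right hs.le hm1
    _ = t := by rw [← hm, mul_div_cancel₀ _ hs.ne']

theorem Real.sSup_Ioi_inter_lowerBounds_range {ι : Type*} [Finite ι] {t : ι → ℝ}
    (ht : ∀ i, 0 < t i) : sSup (Ioi 0 ∩ lowerBounds (range t)) = sInf (range t) := by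
  rcases isEmpty_or_nonempty ι with hι | hι
  · rw [range_eq_empty, lowerBounds_empty, inter_univ, Real.sInf_empty,
      Real.sSup_of_not_bddAbove (not_bddAbove_Ioi 0)]
  have hmem := (range_nonempty t).csInf_mem (finite_range t)
  obtain ⟨i, hi⟩ := hmem
  rw [(isGLB_csInf (range_nonempty t) (finite_range t).bddBelow).lowerBounds_eq, Ioi_inter_Iic,
    csSup_Ioc (hi ▸ ht i)]

def intAffine {n : ℕ} (A : Matrix (Fin n) (Fin n) ℤ) (b : Pt n) : Pt n →ᵃ[ℝ] Pt n :=
  (Matrix.toLin' (A.map ((↑) : ℤ → ℝ))).toAffineMap + AffineMap.const ℝ (Pt n) b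

theorem intAffine_apply {n : ℕ} (A : Matrix (Fin n) (Fin n) ℤ) (b x : Pt n) (i : Fin n) :
    intAffine A b x i = (∑ j, (A i j : ℝ) * x j) + b i :=
  rfl

theorem intAffine_zero {n : ℕ} (A : Matrix (Fin n) (Fin n) ℤ) (b : Pt n) :
    intAffine A b 0 = b := by
  ext i; simp [intAffine_apply]

theorem intAffine_smul_stdVec {n : ℕ} (A : Matrix (Fin n) (Fin n) ℤ) (b : Pt n) (r : ℝ)
    (i : Fin n) : intAffine A b (r • stdVec i) = b + r • ivec (Aᵀ i) := by
  ext k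
  simp [intAffine_apply, stdVec, ivec, add_comm, mul_comm]

theorem isAGLZ_intAffine {n : ℕ} {A : Matrix (Fin n) (Fin n) ℤ} (hA : IsUnit A.det) (b : Pt n) :
    IsAGLZ (intAffine A b) :=
  ⟨A, b, hA, intAffine_apply A b⟩

theorem IsAGLZ.exists_eq_intAffine {n : ℕ} {f : Pt n → Pt n} (hf : IsAGLZ f) :
    ∃ A : Matrix (Fin n) (Fin n) ℤ, IsUnit A.det ∧ f = intAffine A (f 0) := by
  obtain ⟨A, b, hA, hfA⟩ := hf
  have hb : f 0 = b := by ext i; simp [hfA]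
  exact ⟨A, hA, funext fun x => funext fun i => by rw [hfA, hb, intAffine_apply]⟩

theorem IsEdge.subset {n : ℕ} {Δ e : Set (Pt n)} (h : IsEdge Δ e) : e ⊆ Δ := by
  obtain ⟨-, -, -, -, he⟩ := h
  exact he.1

structure IsDelzantCorner {n : ℕ} (Δ : Set (Pt n)) (v : Pt n) (u : Fin n → Fin n → ℤ)
    (t : Fin n → ℝ) : Prop where
  isUnit_det : IsUnit (Matrix.of u).det
  pos : ∀ i, 0 < t i
  isEdge : ∀ i, IsEdge Δ (segment ℝ v (v + t i • ivec (u i)))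
  exists_eq_of_isEdge : ∀ e, IsEdge Δ e → v ∈ e → ∃ i, e = segment ℝ v (v + t i • ivec (u i))

theorem IsDelzant.exists_isDelzantCorner {n : ℕ} {Δ : Set (Pt n)} (hΔ : IsDelzant Δ) {v : Pt n}
    (hv : v ∈ Δ.extremePoints ℝ) : ∃ u t, IsDelzantCorner Δ v u t := by
  obtain ⟨u, t, hu, ht, hedge, huniq⟩ := hΔ.2.2.2.2.2 v hv
  exact ⟨u, t, hu, ht, hedge, huniq⟩

namespace IsDelzantCorner

variable {n : ℕ} {Δ : Set (Pt n)} {v : Pt n} {u : Fin n → Fin n → ℤ} {t : Fin n → ℝ}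

theorem edgeLengths_eq_range (hc : IsDelzantCorner Δ v u t) :
    {l : ℝ | ∃ w : Pt n, IsEdge Δ (segment ℝ v w) ∧ l = ratLength v w} = range t := by
  ext l
  constructor
  · rintro ⟨w, hw, rfl⟩
    obtain ⟨j, hj⟩ := hc.exists_eq_of_isEdge _ hw (left_mem_segment ℝ v w)
    rw [eq_of_segment_eq_segment hj, ratLength_add_smul_row hc.isUnit_det j v (hc.pos j)]
    exact mem_range_self j
  · rintro ⟨j, rfl⟩
    exact ⟨_, hc.isEdge j, (ratLength_add_smul_row hc.isUnit_det j v (hc.pos j)).symm⟩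

theorem segment_subset (hc : IsDelzantCorner Δ v u t) {r : ℝ} (hr : 0 ≤ r) {i : Fin n}
    (hri : r ≤ t i) : segment ℝ v (v + r • ivec (u i)) ⊆ Δ :=
  (segment_add_smul_subset v _ hr hri).trans (hc.isEdge i).subset

theorem exists_isAdmissibleSimplex (hc : IsDelzantCorner Δ v u t) (hΔ : Convex ℝ Δ)
    (hv : v ∈ Δ) {r : ℝ} (hr : 0 < r) (hrt : ∀ i, r ≤ t i) :
    ∃ S, IsAdmissibleSimplex Δ v r S := by
  set F := intAffine (Matrix.of u)ᵀ v
  have hF (i : Fin n) : F (r • stdVec i) = v + r • ivec (u i) := intAffine_smul_stdVec _ _ _ _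
  refine ⟨F '' modelSimplex n r, hr, ?_, F,
    isAGLZ_intAffine (by rw [Matrix.det_transpose]; exact hc.isUnit_det) v, intAffine_zero _ v,
    fun i => ⟨_, hc.isEdge i, left_mem_segment ℝ _ _, ?_⟩, rfl⟩
  · refine (image_mono sdiff_subset).trans ?_
    rw [AffineMap.image_convexHull]
    refine convexHull_min ?_ hΔ
    rintro _ ⟨x, rfl | ⟨i, rfl⟩, rfl⟩
    · rwa [intAffine_zero]
    · rw [hF]
      exact hc.segment_subset hr.le (hrt i) (right_mem_segment ℝ _ _)
  · rw [image_segment, intAffine_zero, hF]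
    exact segment_add_smul_subset v _ hr.le (hrt i)

theorem le_of_add_smul_mem_segment (hc : IsDelzantCorner Δ v u t) {r : ℝ} (hr : 0 < r)
    {a : Fin n → ℤ} (ha : a ≠ 0) {j : Fin n}
    (hmem : v + r • ivec a ∈ segment ℝ v (v + t j • ivec (u j))) :
    r ≤ t j ∧ ∃ m : ℤ, m ≠ 0 ∧ a = m • u j := by
  rw [segment_eq_image'] at hmem
  obtain ⟨θ, ⟨hθ0, hθ1⟩, hθ⟩ := hmem
  rw [add_sub_cancel_left, add_right_inj, smul_smul] at hθ
  have hsmul : (θ * t j / r) • ivec (u j) = ivec a := by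
    rw [div_eq_mul_inv, mul_comm _ r⁻¹, mul_smul, hθ, smul_smul, inv_mul_cancel₀ hr.ne', one_smul]
  obtain ⟨m, hm⟩ := exists_int_eq_of_smul_row hc.isUnit_det hsmul
  have ham : a = m • u j := by
    ext k
    have hk : (m : ℝ) * u j k = a k := by simpa [ivec, hm] using congrFun hsmul k
    simp only [Pi.smul_apply, smul_eq_mul]
    exact_mod_cast hk.symm
  have hm0 : m ≠ 0 := by rintro rfl; exact ha (by simpa using ham)
  have hm1 : (1 : ℝ) ≤ m := by
    have : (0 : ℝ) ≤ m := hm ▸ div_nonneg (mul_nonneg hθ0 (hc.pos j).le) hr.le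
    exact_mod_cast ((by exact_mod_cast this : (0 : ℤ) ≤ m).lt_of_ne' hm0)
  refine ⟨?_, m, hm0, ham⟩
  calc r ≤ r * m := le_mul_of_one_le_right hr.le hm1
    _ = θ * t j := by rw [← hm, mul_div_cancel₀ _ hr.ne']
    _ ≤ t j := mul_le_of_le_one_left (hc.pos j).le hθ1

theorem le_of_isAdmissibleSimplex (hc : IsDelzantCorner Δ v u t) {r : ℝ} {S : Set (Pt n)}
    (h : IsAdmissibleSimplex Δ v r S) (j : Fin n) : r ≤ t j := by
  obtain ⟨hr, -, f, hf, hf0, hedge, -⟩ := h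
  obtain ⟨A, hA, hfA⟩ := hf.exists_eq_intAffine
  rw [hf0] at hfA
  subst hfA
  have hcol (i : Fin n) : Aᵀ i ≠ 0 := fun h0 => not_isUnit_zero <| by
    rwa [← Matrix.det_transpose, Matrix.det_eq_zero_of_row_eq_zero i (congrFun h0)] at hA
  have key (i : Fin n) : ∃ j, r ≤ t j ∧ ∃ m : ℤ, m ≠ 0 ∧ Aᵀ i = m • u j := by
    obtain ⟨e, he, hve, himg⟩ := hedge i
    obtain ⟨j, rfl⟩ := hc.exists_eq_of_isEdge e he hve
    have hmem := himg (mem_image_of_mem _ (right_mem_segment ℝ 0 (r • stdVec i)))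
    rw [intAffine_smul_stdVec] at hmem
    exact ⟨j, hc.le_of_add_smul_mem_segment hr (hcol i) hmem⟩
  choose σ hσt m hm0 hσA using key
  have hσ : σ.Injective := fun i₁ i₂ h =>
    Matrix.eq_of_col_eq_smul_of_col_eq_smul hA (hm0 i₁) (hσA i₁) (h ▸ hσA i₂)
  obtain ⟨i, rfl⟩ := Finite.injective_iff_surjective.mp hσ j
  exact hσt i

theorem admissibleRadii_eq (hc : IsDelzantCorner Δ v u t) (hΔ : Convex ℝ Δ) (hv : v ∈ Δ) :
    {r : ℝ | ∃ S, IsAdmissibleSimplex Δ v r S} = Ioi 0 ∩ lowerBounds (range t) := by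
  ext r
  simp only [mem_inter_iff, mem_Ioi, mem_lowerBounds, forall_mem_range]
  constructor
  · rintro ⟨S, hS⟩
    exact ⟨hS.1, hc.le_of_isAdmissibleSimplex hS⟩
  · rintro ⟨hr, hrt⟩
    exact hc.exists_isAdmissibleSimplex hΔ hv hr hrt

end IsDelzantCorner

/-- For a vertex `v` of a Delzant polytope `Δ ⊆ ℝⁿ`, the maximal radius
`r_v` of an admissible simplex centered at `v` equals the minimum of the rational lengths
of the edges of `Δ` meeting `v`. -/
theorem maxRadius_eq_min_ratLength {n : ℕ} (Δ : Set (Pt n)) (hΔ : IsDelzant Δ)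
    (v : Pt n) (hv : v ∈ Set.extremePoints ℝ Δ) :
    maxRadius Δ v =
      sInf {l : ℝ | ∃ w : Pt n, IsEdge Δ (segment ℝ v w) ∧ l = ratLength v w} := by
  obtain ⟨u, t, hc⟩ := hΔ.exists_isDelzantCorner hv
  rw [maxRadius, hc.admissibleRadii_eq hΔ.2.1 hv.1, hc.edgeLengths_eq_range]
  exact Real.sSup_Ioi_inter_lowerBounds_range hc.pos
end
end

section
/- For n ≥ 2, the product of a standard simplex of dimension ⌊n/2⌋ and a standard simplex of dimension ⌈n/2⌉ is an n-dimensional Delzant polytope with exactly ⌊(n+2)/2⌋ · ⌈(n+2)/2⌉ vertices and exactly n + 2 facets. In particular, the vertex bound in the statement 'an n-dimensional Delzant polytope with at least ⌊(n+2)/2⌋·⌈(n+2)/2⌉+1 vertices has at least n+3 facets' is sharp. -/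
open Set MeasureTheory Pointwise

noncomputable section

/-- `F` is a facet of the convex polytope `Δ ⊆ ℝⁿ`: a nonempty closed convex extreme
subset of dimension `n - 1`. -/
def IsFacet {n : ℕ} (Δ F : Set (Pt n)) : Prop :=
  IsExtreme ℝ Δ F ∧ Convex ℝ F ∧ IsClosed F ∧ F.Nonempty ∧
    Module.finrank ℝ (affineSpan ℝ F).direction = n - 1

/-- The product of the standard simplex of dimension `⌊n/2⌋` (in the first `⌊n/2⌋`
coordinates) and the standard simplex of dimension `⌈n/2⌉` (in the remaining `⌈n/2⌉`
coordinates), realized in `ℝⁿ = ℝ^{⌊n/2⌋} × ℝ^{⌈n/2⌉}`. -/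
def prodSimplex (n : ℕ) : Set (Pt n) :=
  {x | (∀ i, 0 ≤ x i) ∧
       (∑ i ∈ Finset.univ.filter fun i : Fin n => (i : ℕ) < n / 2, x i) ≤ 1 ∧
       (∑ i ∈ Finset.univ.filter fun i : Fin n => n / 2 ≤ (i : ℕ), x i) ≤ 1}

/-!
The product of the two simplices is the polyhedron cut out by the `n + 2` inequalities `xᵢ ≥ 0`
and `∑_{i ∈ B} xᵢ ≤ 1` for the two blocks `B` of coordinates. For a polyhedron given by finitely
many inequalities, a nonempty convex extreme subset `F` contains a point `x` at which only the
inequalities tight on all of `F` are tight, and `F` consists of all points of the polyhedron at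
which these are tight. Hence the vertices are the 0/1 points with at most one `1` per block, and
a facet is cut out by a single inequality, since two distinct tight inequalities force
codimension two.

At a vertex `v`, replacing `yⱼ` by `1 - ∑_{block of j} y` for every `j` with `vⱼ = 1` is an
affine involution of the polytope with integral linear part exchanging `0` and `v`. It carries
the edges `[0, eᵢ]` at the origin to the edges at `v`, which gives the Delzant condition there.
-/

theorem IsExtreme.image_of_involutive {E : Type*} [AddCommGroup E] [Module ℝ E]
    {g : E →ᵃ[ℝ] E} (hg : Function.Involutive g) {A B : Set E} (hA : Set.MapsTo g A A)
    (hB : IsExtreme ℝ A B) : IsExtreme ℝ A (g '' B) := by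
  refine ⟨Set.image_subset_iff.2 fun x hx => hA (hB.subset hx), ?_⟩
  rintro x hx y hy _ ⟨z, hz, rfl⟩ hseg
  have hseg' : z ∈ openSegment ℝ (g x) (g y) := by
    rw [← image_openSegment, ← hg z]; exact Set.mem_image_of_mem g hseg
  exact ⟨g x, hB.left_mem_of_mem_openSegment (hA hx) (hA hy) hz hseg', hg x⟩

theorem IsEdge.image_of_involutive {n : ℕ} {g : Pt n →ᵃ[ℝ] Pt n}
    (hg : Function.Involutive g) {Δ e : Set (Pt n)} (hΔ : Set.MapsTo g Δ Δ) (he : IsEdge Δ e) :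
    IsEdge Δ (g '' e) := by
  obtain ⟨v, w, hvw, rfl, hext⟩ := he
  exact ⟨g v, g w, hg.injective.ne hvw, image_segment ℝ g v w,
    hext.image_of_involutive hg hΔ⟩

theorem IsEdge.exists_eq_segment {n : ℕ} {Δ e : Set (Pt n)} (he : IsEdge Δ e) {v : Pt n}
    (hv : v ∈ Set.extremePoints ℝ Δ) (hve : v ∈ e) :
    ∃ w, w ≠ v ∧ e = segment ℝ v w := by
  obtain ⟨a, b, hab, rfl, hext⟩ := he
  rcases (mem_extremePoints_iff_forall_segment.1 hv).2 a (hext.subset (left_mem_segment ℝ a b))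
    b (hext.subset (right_mem_segment ℝ a b)) hve with rfl | rfl
  · exact ⟨b, hab.symm, rfl⟩
  · exact ⟨a, hab, segment_symm ℝ a b⟩

section Polyhedron

variable {E ι : Type*} [AddCommGroup E] [Module ℝ E]
variable (f : ι → E →ₗ[ℝ] ℝ) (c : ι → ℝ)

def polyhedron : Set E := {x | ∀ k, f k x ≤ c k}

def tightSet (x : E) : Set ι := {k | f k x = c k}

def polyhedronFace (T : Set ι) : Set E := {x ∈ polyhedron f c | T ⊆ tightSet f c x}

variable {f c}

theorem convex_polyhedronFace (T : Set ι) : Convex ℝ (polyhedronFace f c T) := by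
  rintro x ⟨hxP, hxT⟩ y ⟨hyP, hyT⟩ a b ha hb hab
  have hcomb : ∀ k, f k (a • x + b • y) = a * f k x + b * f k y := fun k => by simp
  refine ⟨fun k => ?_, fun k hk => ?_⟩
  · calc f k (a • x + b • y) = a * f k x + b * f k y := hcomb k
      _ ≤ a * c k + b * c k := by gcongr; exacts [hxP k, hyP k]
      _ = c k := by rw [← add_mul, hab, one_mul]
  · have hxk : f k x = c k := hxT hk
    have hyk : f k y = c k := hyT hk
    show f k (a • x + b • y) = c k
    rw [hcomb, hxk, hyk, ← add_mul, hab, one_mul]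

theorem convex_polyhedron : Convex ℝ (polyhedron f c) := by
  simpa [polyhedronFace] using convex_polyhedronFace (f := f) (c := c) ∅

theorem isExtreme_polyhedronFace (T : Set ι) :
    IsExtreme ℝ (polyhedron f c) (polyhedronFace f c T) := by
  refine ⟨fun x hx => hx.1,
    fun x hx y hy z ⟨_, hzT⟩ ⟨a, b, ha, hb, hab, hz⟩ => ⟨hx, fun k hk => ?_⟩⟩
  have hzk : a * f k x + b * f k y = c k := by
    rw [← hzT hk]; simp [← hz]
  have : a * c k ≤ a * f k x := by
    nlinarith [mul_le_mul_of_nonneg_left (hy k) hb.le, congrArg (· * c k) hab]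
  exact le_antisymm (hx k) (le_of_mul_le_mul_left this ha)

/-- For small `ε > 0` the point `x + ε • (x - y)` stays in the polyhedron, and `x` lies strictly
between it and `y`. -/
theorem IsExtreme.mem_of_tightSet_subset [Finite ι] {F : Set E}
    (hF : IsExtreme ℝ (polyhedron f c) F) {x y : E} (hx : x ∈ F) (hy : y ∈ polyhedron f c)
    (hxy : tightSet f c x ⊆ tightSet f c y) : y ∈ F := by
  have hnear : ∀ᶠ ε in nhds (0 : ℝ), ∀ k, f k (x + ε • (x - y)) ≤ c k := by
    refine Filter.eventually_all.2 fun k => ?_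
    simp only [map_add, map_smul, map_sub, smul_eq_mul]
    by_cases hk : f k x = c k
    · exact Filter.Eventually.of_forall fun ε => by rw [hxy hk, hk]; simp
    · have hlt : f k x + 0 * (f k x - f k y) < c k := by
        simpa using lt_of_le_of_ne (hF.subset hx k) hk
      exact (((continuous_const.add (continuous_id.mul continuous_const)).tendsto 0).eventually
        (gt_mem_nhds hlt)).mono fun _ => le_of_lt
  obtain ⟨ε, hε, hεpos⟩ := ((hnear.filter_mono nhdsWithin_le_nhds).and
    (self_mem_nhdsWithin (s := Set.Ioi (0 : ℝ)) (a := 0))).exists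
  refine hF.left_mem_of_mem_openSegment hy hε hx
    ⟨ε / (1 + ε), 1 / (1 + ε), by positivity, by positivity, by field_simp; ring, ?_⟩
  match_scalars <;> field_simp
  ring

theorem Convex.exists_mem_tightSet_subset [Finite ι] {F : Set E} (hFc : Convex ℝ F)
    (hFP : F ⊆ polyhedron f c) (hFne : F.Nonempty) :
    ∃ x ∈ F, ∀ y ∈ F, tightSet f c x ⊆ tightSet f c y := by
  have : Fintype ι := Fintype.ofFinite ι
  have hwit : ∀ k, ∃ z ∈ F, f k z = c k → ∀ y ∈ F, f k y = c k := fun k => by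
    by_cases h : ∀ y ∈ F, f k y = c k
    · exact hFne.imp fun z hz => ⟨hz, fun _ => h⟩
    · obtain ⟨z, hz, hzk⟩ := by simpa only [not_forall] using h
      exact ⟨z, hz, fun h' => absurd h' hzk⟩
  choose z hzF hz using hwit
  cases isEmpty_or_nonempty ι
  · obtain ⟨x, hx⟩ := hFne
    exact ⟨x, hx, fun y _ k => isEmptyElim k⟩
  have hN : (0 : ℝ) < Fintype.card ι := by exact_mod_cast Fintype.card_pos
  -- an inequality tight at the barycentre of the `z k` is tight at every `z k`
  refine ⟨∑ j, (Fintype.card ι : ℝ)⁻¹ • z j, hFc.sum_mem (fun _ _ => by positivity)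
    (by simp [hN.ne']) fun j _ => hzF j, fun y hy k hk => hz k ?_ y hy⟩
  have hsum : ∑ j, (Fintype.card ι : ℝ)⁻¹ * f k (z j) =
      ∑ _j : ι, (Fintype.card ι : ℝ)⁻¹ * c k := by
    simpa [tightSet, hN.ne'] using hk
  have := (Finset.sum_eq_sum_iff_of_le fun j _ =>
    mul_le_mul_of_nonneg_left (hFP (hzF j) k) (inv_nonneg.2 hN.le)).1 hsum k (Finset.mem_univ k)
  exact mul_left_cancel₀ (inv_ne_zero hN.ne') this

theorem IsExtreme.eq_polyhedronFace [Finite ι] {F : Set E} (hF : IsExtreme ℝ (polyhedron f c) F)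
    (hFc : Convex ℝ F) (hFne : F.Nonempty) :
    ∃ x ∈ F, F = polyhedronFace f c (tightSet f c x) := by
  obtain ⟨x, hx, hmin⟩ := hFc.exists_mem_tightSet_subset hF.subset hFne
  exact ⟨x, hx, Set.Subset.antisymm (fun y hy => ⟨hF.subset hy, hmin y hy⟩)
    fun y hy => hF.mem_of_tightSet_subset hx hy.1 hy.2⟩

variable [TopologicalSpace E] [IsTopologicalAddGroup E] [ContinuousSMul ℝ E] [T2Space E]
  [FiniteDimensional ℝ E]

theorem isClosed_polyhedron : IsClosed (polyhedron f c) := by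
  simp only [polyhedron, Set.ofPred_forall]
  exact isClosed_iInter fun k => isClosed_le (f k).continuous_of_finiteDimensional continuous_const

theorem isClosed_polyhedronFace (T : Set ι) : IsClosed (polyhedronFace f c T) := by
  have : polyhedronFace f c T = polyhedron f c ∩ ⋂ k ∈ T, {x | f k x = c k} := by
    ext x; simp [polyhedronFace, tightSet, Set.subset_def]
  rw [this]
  exact isClosed_polyhedron.inter (isClosed_biInter fun k _ =>
    isClosed_eq (f k).continuous_of_finiteDimensional continuous_const)

theorem subset_interior_polyhedron [Finite ι] :
    {x | ∀ k, f k x < c k} ⊆ interior (polyhedron f c) := by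
  refine interior_maximal (fun x hx k => (hx k).le) ?_
  simp only [Set.ofPred_forall]
  exact isOpen_iInter_of_finite fun k =>
    isOpen_lt (f k).continuous_of_finiteDimensional continuous_const

end Polyhedron

section LinearAlgebra

open Module

variable {E : Type*} [AddCommGroup E] [Module ℝ E]

theorem vectorSpan_le_ker_of_forall_eq {s : Set E} (f : E →ₗ[ℝ] ℝ) {a : ℝ}
    (h : ∀ x ∈ s, f x = a) : vectorSpan ℝ s ≤ LinearMap.ker f := by
  rw [vectorSpan_def, Submodule.span_le]
  rintro _ ⟨x, hx, y, hy, rfl⟩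
  simp [h x hx, h y hy]

variable [FiniteDimensional ℝ E]

theorem finrank_ker_inf_ker_lt {f g : E →ₗ[ℝ] ℝ} (hf : f ≠ 0) {z : E} (hfz : f z = 0)
    (hgz : g z ≠ 0) :
    finrank ℝ ↥(LinearMap.ker f ⊓ LinearMap.ker g) < finrank ℝ E - 1 := by
  have hlt : LinearMap.ker f ⊓ LinearMap.ker g < LinearMap.ker f :=
    lt_of_le_of_ne inf_le_left fun h => hgz (h.ge (LinearMap.mem_ker.2 hfz)).2
  have := Submodule.finrank_lt_finrank_of_lt hlt
  have := Module.Dual.finrank_ker_add_one_of_ne_zero hf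
  omega

theorem finrank_sub_one_le_of_sup_span_singleton_eq_top {V : Submodule ℝ E} {w : E}
    (h : V ⊔ ℝ ∙ w = ⊤) : finrank ℝ E - 1 ≤ finrank ℝ V := by
  have := Submodule.finrank_add_le_finrank_add_finrank V (ℝ ∙ w)
  rw [h, finrank_top] at this
  have := finrank_span_le_card (R := ℝ) ({w} : Set E)
  simp only [Set.toFinset_singleton, Finset.card_singleton] at this
  omega

variable {n : ℕ}

theorem stdVec_eq_single (i : Fin n) : stdVec i = Pi.single i 1 := by
  funext j; simp [stdVec, Pi.single_apply]

theorem eq_top_of_forall_stdVec_mem {S : Submodule ℝ (Pt n)} (h : ∀ i, stdVec i ∈ S) :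
    S = ⊤ := by
  rw [eq_top_iff, ← (Pi.basisFun ℝ (Fin n)).span_eq, Submodule.span_le]
  rintro _ ⟨i, rfl⟩
  simpa [stdVec_eq_single] using h i

end LinearAlgebra

namespace ProdSimplex

open Module

variable {n : ℕ}

def side (i : Fin n) : Bool := decide ((i : ℕ) < n / 2)

def block (n : ℕ) (b : Bool) : Finset (Fin n) := Finset.univ.filter fun i => side i = b

@[simp] theorem mem_block {b : Bool} {i : Fin n} : i ∈ block n b ↔ side i = b := by
  simp [block]

theorem card_block_true : (block n true).card = n / 2 := by
  simp [block, side, Fin.card_filter_val_lt]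
  omega

theorem card_block_false : (block n false).card = n - n / 2 := by
  have := Finset.card_filter_add_card_filter_not (s := Finset.univ) (fun i : Fin n => side i)
  simp only [Bool.not_eq_true, Finset.card_univ, Fintype.card_fin] at this
  have htrue : (block n true).card = n / 2 := card_block_true
  simp only [block] at htrue ⊢
  omega

theorem block_nonempty (hn : 2 ≤ n) (b : Bool) : (block n b).Nonempty := by
  rw [← Finset.card_pos]
  cases b
  · rw [card_block_false]; omega
  · rw [card_block_true]; omega

theorem mem_prodSimplex {x : Pt n} :
    x ∈ prodSimplex n ↔ (∀ i, 0 ≤ x i) ∧ ∀ b, ∑ i ∈ block n b, x i ≤ 1 := by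
  simp [prodSimplex, block, side, Bool.forall_bool, and_comm]

def form (n : ℕ) : Fin n ⊕ Bool → Pt n →ₗ[ℝ] ℝ :=
  Sum.elim (fun i => -LinearMap.proj i) fun b => ∑ i ∈ block n b, LinearMap.proj i

def bound : Fin n ⊕ Bool → ℝ := Sum.elim 0 1

@[simp] theorem form_inl_apply (i : Fin n) (x : Pt n) : form n (.inl i) x = -x i := rfl

@[simp] theorem form_inr_apply (b : Bool) (x : Pt n) :
    form n (.inr b) x = ∑ i ∈ block n b, x i := by
  simp [form]

@[simp] theorem mem_tightSet_inl {i : Fin n} {x : Pt n} :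
    .inl i ∈ tightSet (form n) bound x ↔ x i = 0 := by
  simp [tightSet, bound]

@[simp] theorem mem_tightSet_inr {b : Bool} {x : Pt n} :
    .inr b ∈ tightSet (form n) bound x ↔ ∑ i ∈ block n b, x i = 1 := by
  simp [tightSet, bound]

theorem prodSimplex_eq_polyhedron : prodSimplex n = polyhedron (form n) bound := by
  ext x
  simp [mem_prodSimplex, polyhedron, bound]

theorem exists_pos_of_mem_tightSet_inr {x : Pt n} {b : Bool}
    (hb : .inr b ∈ tightSet (form n) bound x) : ∃ q, side q = b ∧ 0 < x q := by
  obtain ⟨q, hq, hxq⟩ := Finset.exists_lt_of_sum_lt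
    (show ∑ i ∈ block n b, (0 : ℝ) < ∑ i ∈ block n b, x i by simp [mem_tightSet_inr.1 hb])
  exact ⟨q, mem_block.1 hq, hxq⟩

theorem apply_le_one {x : Pt n} (hx : x ∈ prodSimplex n) (i : Fin n) : x i ≤ 1 :=
  (Finset.single_le_sum (fun j _ => (mem_prodSimplex.1 hx).1 j) (mem_block.2 rfl)).trans
    ((mem_prodSimplex.1 hx).2 (side i))

theorem convex_prodSimplex : Convex ℝ (prodSimplex n) :=
  prodSimplex_eq_polyhedron ▸ convex_polyhedron

theorem isCompact_prodSimplex : IsCompact (prodSimplex n) := by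
  refine Metric.isCompact_of_isClosed_isBounded (prodSimplex_eq_polyhedron ▸ isClosed_polyhedron)
    ((Metric.isBounded_Icc (0 : Pt n) 1).subset fun x hx => ⟨?_, ?_⟩)
  exacts [(mem_prodSimplex.1 hx).1, apply_le_one hx]

theorem interior_prodSimplex_nonempty : (interior (prodSimplex n)).Nonempty := by
  refine ⟨fun _ => 1 / (n + 1), prodSimplex_eq_polyhedron ▸ subset_interior_polyhedron ?_⟩
  rintro (i | b)
  · simpa [bound] using Nat.cast_add_one_pos n
  · have : ((block n b).card : ℝ) < n + 1 := by
      exact_mod_cast (Finset.card_le_univ _).trans_lt (by simp)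
    simpa [bound, ← div_eq_mul_inv] using (div_lt_one (by positivity)).2 this

/-- `o b` is the coordinate of block `b` carrying the `1` of the vertex, if any. -/
def vertex (o : Bool → Option (Fin n)) : Pt n := fun j => if o (side j) = some j then 1 else 0

def vertexIndex (n : ℕ) : Finset (Bool → Option (Fin n)) :=
  Fintype.piFinset fun b => (block n b).insertNone

theorem mem_vertexIndex {o : Bool → Option (Fin n)} :
    o ∈ vertexIndex n ↔ ∀ b i, o b = some i → side i = b := by
  simp [vertexIndex, Finset.mem_insertNone]

theorem sum_block_vertex {o : Bool → Option (Fin n)} (ho : o ∈ vertexIndex n) (b : Bool) :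
    ∑ j ∈ block n b, vertex o j = if o b = none then 0 else 1 := by
  have : ∀ j ∈ block n b, vertex o j = if o b = some j then 1 else 0 := fun j hj => by
    rw [mem_block] at hj; simp [vertex, hj]
  rw [Finset.sum_congr rfl this]
  rcases hob : o b with _ | i
  · simp
  · simp [mem_vertexIndex.1 ho b i hob]

theorem vertex_mem_prodSimplex {o : Bool → Option (Fin n)} (ho : o ∈ vertexIndex n) :
    vertex o ∈ prodSimplex n := by
  refine mem_prodSimplex.2 ⟨fun j => ?_, fun b => ?_⟩
  · unfold vertex; split_ifs <;> norm_num
  · rw [sum_block_vertex ho]; split_ifs <;> norm_num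

theorem vertex_mem_extremePoints {o : Bool → Option (Fin n)} (ho : o ∈ vertexIndex n) :
    vertex o ∈ Set.extremePoints ℝ (prodSimplex n) := by
  have hface : polyhedronFace (form n) bound (tightSet (form n) bound (vertex o)) = {vertex o} := by
    refine Set.eq_singleton_iff_unique_mem.2
      ⟨⟨prodSimplex_eq_polyhedron ▸ vertex_mem_prodSimplex ho, subset_rfl⟩,
        fun y ⟨_, hy⟩ => funext fun j => ?_⟩
    by_cases hj : o (side j) = some j
    · have hsum : ∑ k ∈ block n (side j), y k = 1 := by
        refine mem_tightSet_inr.1 (hy (mem_tightSet_inr.2 ?_))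
        simp [sum_block_vertex ho, hj]
      rw [Finset.sum_eq_single_of_mem j (mem_block.2 rfl) fun k hk hkj => mem_tightSet_inl.1
        (hy (mem_tightSet_inl.2 ?_))] at hsum
      · simp [vertex, hj, hsum]
      · rw [mem_block] at hk
        simp [vertex, hk, hj, Ne.symm hkj]
    · simpa [vertex, hj] using mem_tightSet_inl.1 (hy (mem_tightSet_inl.2 (by simp [vertex, hj])))
  rw [← isExtreme_singleton, ← hface, prodSimplex_eq_polyhedron]
  exact isExtreme_polyhedronFace _

theorem exists_vertex_tightSet_subset (x : Pt n) :
    ∃ o ∈ vertexIndex n, tightSet (form n) bound x ⊆ tightSet (form n) bound (vertex o) := by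
  have hround : ∀ b, ∃ ob : Option (Fin n), (∀ i, ob = some i → side i = b ∧ 0 < x i) ∧
      (∑ i ∈ block n b, x i = 1 → ob ≠ none) := fun b => by
    by_cases hb : ∑ i ∈ block n b, x i = 1
    · obtain ⟨i, hi, hxi⟩ := exists_pos_of_mem_tightSet_inr (mem_tightSet_inr.2 hb)
      exact ⟨some i, by rintro _ ⟨⟩; exact ⟨hi, hxi⟩, by simp⟩
    · exact ⟨none, by simp, fun h => absurd h hb⟩
  choose o ho hsum using hround
  have hoV : o ∈ vertexIndex n := mem_vertexIndex.2 fun b i h => (ho b i h).1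
  refine ⟨o, hoV, ?_⟩
  rintro (j | b) hk
  · refine mem_tightSet_inl.2 (if_neg fun h => ?_)
    exact (ho _ j h).2.ne' (mem_tightSet_inl.1 hk)
  · rw [mem_tightSet_inr, sum_block_vertex hoV, if_neg (hsum b (mem_tightSet_inr.1 hk))]

theorem extremePoints_prodSimplex :
    Set.extremePoints ℝ (prodSimplex n) = vertex '' vertexIndex n := by
  refine Set.Subset.antisymm (fun x hx => ?_) ?_
  · obtain ⟨o, ho, hsub⟩ := exists_vertex_tightSet_subset x
    rw [prodSimplex_eq_polyhedron] at hx
    exact ⟨o, ho, (isExtreme_singleton.2 hx).mem_of_tightSet_subset rfl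
      (prodSimplex_eq_polyhedron ▸ vertex_mem_prodSimplex ho) hsub⟩
  · rintro _ ⟨o, ho, rfl⟩
    exact vertex_mem_extremePoints ho

theorem injOn_vertex : Set.InjOn vertex (vertexIndex n : Set (Bool → Option (Fin n))) := by
  intro o ho o' ho' h
  have key : ∀ {o o'}, o ∈ vertexIndex n → vertex o = vertex o' →
      ∀ b i, o b = some i → o' b = some i := by
    intro o o' ho h b i hi
    have hside := mem_vertexIndex.1 ho b i hi
    have := congrFun h i
    simp only [vertex, hside, hi, if_true] at this
    split_ifs at this with h'
    exacts [h', absurd this one_ne_zero]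
  funext b
  exact Option.ext fun i => ⟨key ho h b i, key ho' h.symm b i⟩

theorem ncard_extremePoints_prodSimplex :
    (Set.extremePoints ℝ (prodSimplex n)).ncard = (n / 2 + 1) * (n - n / 2 + 1) := by
  rw [extremePoints_prodSimplex, injOn_vertex.ncard_image, Set.ncard_coe_finset, vertexIndex,
    Fintype.card_piFinset, Fintype.prod_bool, Finset.card_insertNone, Finset.card_insertNone,
    card_block_true, card_block_false]

theorem sum_block_stdVec (b : Bool) (i : Fin n) :
    ∑ k ∈ block n b, stdVec i k = if side i = b then 1 else 0 := by
  simp [stdVec]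

theorem vertex_none : vertex (fun _ => none : Bool → Option (Fin n)) = 0 := by
  funext j; simp [vertex]

theorem vertex_update_none (i : Fin n) :
    vertex (Function.update (fun _ => none) (side i) (some i)) = stdVec i := by
  funext j
  by_cases hj : side j = side i
  · simp [vertex, stdVec, hj, eq_comm]
  · simp [vertex, stdVec, hj]
    rintro rfl; exact hj rfl

theorem update_none_mem_vertexIndex (i : Fin n) :
    Function.update (fun _ => none) (side i) (some i) ∈ vertexIndex n := by
  refine mem_vertexIndex.2 fun b j h => ?_
  by_cases hb : b = side i
  · subst hb; simp at h; rw [h]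
  · simp [Function.update_of_ne hb] at h

theorem zero_mem_extremePoints : (0 : Pt n) ∈ Set.extremePoints ℝ (prodSimplex n) :=
  vertex_none ▸ vertex_mem_extremePoints (by simp [mem_vertexIndex])

theorem stdVec_mem_extremePoints (i : Fin n) :
    stdVec i ∈ Set.extremePoints ℝ (prodSimplex n) :=
  vertex_update_none i ▸ vertex_mem_extremePoints (update_none_mem_vertexIndex i)

theorem stdVec_mem_prodSimplex (i : Fin n) : stdVec i ∈ prodSimplex n :=
  (stdVec_mem_extremePoints i).1

theorem segment_zero_stdVec (i : Fin n) :
    segment ℝ 0 (stdVec i) = polyhedronFace (form n) bound (Sum.inl '' {i}ᶜ) := by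
  ext x
  simp only [polyhedronFace, ← prodSimplex_eq_polyhedron, Set.image_subset_iff]
  constructor
  · intro hx
    refine ⟨convex_prodSimplex.segment_subset (zero_mem_extremePoints.1)
      (stdVec_mem_prodSimplex i) hx, fun j hj => mem_tightSet_inl.2 ?_⟩
    obtain ⟨a, b, -, -, -, rfl⟩ := hx
    simp [stdVec, show j ≠ i from hj]
  · rintro ⟨hx, hT⟩
    have hxi : x = x i • stdVec i := funext fun j => by
      by_cases hj : j = i
      · simp [stdVec, hj]
      · simpa [stdVec, hj] using mem_tightSet_inl.1 (hT hj)
    refine ⟨1 - x i, x i, by linarith [apply_le_one hx i], (mem_prodSimplex.1 hx).1 i, by ring,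
      ?_⟩
    rw [smul_zero, zero_add, ← hxi]

theorem isEdge_segment_zero_stdVec (i : Fin n) :
    IsEdge (prodSimplex n) (segment ℝ 0 (stdVec i)) := by
  refine ⟨0, stdVec i, fun h => ?_, rfl, ?_⟩
  · simpa [stdVec] using congrFun h i
  · rw [segment_zero_stdVec, prodSimplex_eq_polyhedron]
    exact isExtreme_polyhedronFace _

/-- If `w` is the far end of an edge at `0` and `w p ≠ 0`, every inequality tight at `w / 2` is
tight at `stdVec p`, so `stdVec p` lies on the edge; being a vertex, it is `w`. -/
theorem exists_eq_segment_zero_stdVec {e : Set (Pt n)} (he : IsEdge (prodSimplex n) e)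
    (h0 : (0 : Pt n) ∈ e) : ∃ i, e = segment ℝ 0 (stdVec i) := by
  obtain ⟨w, hw0, rfl⟩ := he.exists_eq_segment zero_mem_extremePoints h0
  obtain ⟨-, -, -, -, hext⟩ := he
  obtain ⟨p, hp⟩ := Function.ne_iff.1 hw0
  have hmid : (2⁻¹ : ℝ) • w ∈ segment ℝ 0 w :=
    ⟨2⁻¹, 2⁻¹, by norm_num, by norm_num, by norm_num, by simp⟩
  have hpe : stdVec p ∈ segment ℝ 0 w := by
    have hwP := (mem_prodSimplex.1 (hext.subset (right_mem_segment ℝ 0 w))).2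
    rw [prodSimplex_eq_polyhedron] at hext
    refine hext.mem_of_tightSet_subset hmid
      (prodSimplex_eq_polyhedron ▸ stdVec_mem_prodSimplex p) ?_
    rintro (j | b) hk
    · refine mem_tightSet_inl.2 (if_neg ?_)
      rintro rfl
      exact hp (by simpa using mem_tightSet_inl.1 hk)
    · simp [← Finset.mul_sum] at hk
      linarith [hwP b]
  rcases (mem_extremePoints_iff_forall_segment.1 (stdVec_mem_extremePoints p)).2 0
    zero_mem_extremePoints.1 w (hext.subset (right_mem_segment ℝ 0 w)) hpe with h | h
  · simpa [stdVec] using congrFun h p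
  · exact ⟨p, by rw [h]⟩

def vertexSwapMatrix (o : Bool → Option (Fin n)) : Matrix (Fin n) (Fin n) ℤ :=
  Matrix.of fun j k =>
    if o (side j) = some j then -(if side k = side j then 1 else 0) else if j = k then 1 else 0

/-- The lattice-preserving affine involution of `prodSimplex n` exchanging `0` and `vertex o`
(see `vertexSwap_apply`). -/
def vertexSwap (o : Bool → Option (Fin n)) : Pt n →ᵃ[ℝ] Pt n :=
  (Matrix.toLin' ((vertexSwapMatrix o).map (↑))).toAffineMap +
    AffineMap.const ℝ (Pt n) (vertex o)

theorem vertexSwap_apply (o : Bool → Option (Fin n)) (y : Pt n) (j : Fin n) :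
    vertexSwap o y j =
      if o (side j) = some j then 1 - ∑ k ∈ block n (side j), y k else y j := by
  simp only [vertexSwap, AffineMap.coe_add, LinearMap.coe_toAffineMap, AffineMap.coe_const,
    Pi.add_apply, Function.const_apply, Matrix.toLin'_apply, Matrix.mulVec, dotProduct,
    Matrix.map_apply, vertexSwapMatrix, Matrix.of_apply, vertex]
  split_ifs with hj
  · simp [Finset.sum_ite, block, neg_mul]
    ring
  · simp

theorem sum_block_vertexSwap {o : Bool → Option (Fin n)} {j : Fin n} (hj : o (side j) = some j)
    (y : Pt n) : ∑ k ∈ block n (side j), vertexSwap o y k = 1 - y j := by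
  have hrest : ∀ k ∈ (block n (side j)).erase j, vertexSwap o y k = y k := fun k hk => by
    obtain ⟨hkj, hk⟩ := Finset.mem_erase.1 hk
    rw [mem_block] at hk
    rw [vertexSwap_apply, if_neg (by rw [hk, hj]; exact fun h => hkj (Option.some.inj h).symm)]
  rw [← Finset.add_sum_erase _ _ (mem_block.2 rfl), Finset.sum_congr rfl hrest,
    vertexSwap_apply, if_pos hj, ← Finset.add_sum_erase _ _ (mem_block.2 rfl)]
  ring

theorem sum_block_vertexSwap_of_eq_none {o : Bool → Option (Fin n)} {b : Bool} (hb : o b = none)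
    (y : Pt n) :
    ∑ k ∈ block n b, vertexSwap o y k = ∑ k ∈ block n b, y k :=
  Finset.sum_congr rfl fun k hk => by
    rw [mem_block] at hk
    rw [vertexSwap_apply, if_neg (by simp [hk, hb])]

theorem vertexSwap_zero (o : Bool → Option (Fin n)) : vertexSwap o 0 = vertex o := by
  funext j; simp [vertexSwap_apply, vertex]

theorem involutive_vertexSwap (o : Bool → Option (Fin n)) :
    Function.Involutive (vertexSwap o) := fun y => by
  funext j
  rw [vertexSwap_apply]
  split_ifs with hj
  · rw [sum_block_vertexSwap hj]; ring
  · rw [vertexSwap_apply, if_neg hj]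

theorem mapsTo_vertexSwap {o : Bool → Option (Fin n)} (ho : o ∈ vertexIndex n) :
    Set.MapsTo (vertexSwap o) (prodSimplex n) (prodSimplex n) := by
  intro y hy
  obtain ⟨hy0, hy1⟩ := mem_prodSimplex.1 hy
  refine mem_prodSimplex.2 ⟨fun j => ?_, fun b => ?_⟩
  · rw [vertexSwap_apply]
    split_ifs
    exacts [sub_nonneg.2 (hy1 _), hy0 j]
  · rcases hb : o b with _ | j
    · rw [sum_block_vertexSwap_of_eq_none hb]; exact hy1 b
    · have hj : side j = b := mem_vertexIndex.1 ho b j hb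
      subst hj
      rw [sum_block_vertexSwap hb]; linarith [hy0 j]

theorem vertexSwap_stdVec (o : Bool → Option (Fin n)) (i : Fin n) :
    vertexSwap o (stdVec i) = vertex o + ivec fun j => vertexSwapMatrix o j i := by
  funext j
  simp [vertexSwap, stdVec_eq_single, ivec, add_comm]

theorem isUnit_det_vertexSwapMatrix (o : Bool → Option (Fin n)) :
    IsUnit (vertexSwapMatrix o).det := by
  set M : Matrix (Fin n) (Fin n) ℝ := (vertexSwapMatrix o).map (↑)
  -- `M` is the linear part of the involution `vertexSwap o`
  have hlin : ∀ y, M.mulVec (M.mulVec y) = y := fun y => by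
    have h := involutive_vertexSwap o y
    have h0 := involutive_vertexSwap o 0
    simp only [vertexSwap, AffineMap.coe_add, LinearMap.coe_toAffineMap, AffineMap.coe_const,
      Pi.add_apply, Function.const_apply, Matrix.toLin'_apply, Matrix.mulVec_add,
      Matrix.mulVec_zero, zero_add] at h h0
    rwa [add_assoc, h0, add_zero] at h
  have hMM : M * M = 1 := Matrix.ext_of_mulVec_single fun i => by
    rw [← Matrix.mulVec_mulVec, hlin, Matrix.one_mulVec]
  have hinj :
      Function.Injective ((Int.castRingHom ℝ).mapMatrix : Matrix (Fin n) (Fin n) ℤ → _) :=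
    Matrix.map_injective Int.cast_injective
  refine Matrix.isUnit_det_of_left_inverse (B := vertexSwapMatrix o) (hinj ?_)
  rw [map_mul, map_one]
  exact hMM

theorem exists_delzant_basis_at_vertex {o : Bool → Option (Fin n)} (ho : o ∈ vertexIndex n) :
    ∃ (u : Fin n → Fin n → ℤ) (t : Fin n → ℝ),
      IsUnit (Matrix.of u).det ∧ (∀ i, 0 < t i) ∧
      (∀ i, IsEdge (prodSimplex n) (segment ℝ (vertex o) (vertex o + t i • ivec (u i)))) ∧
      ∀ e, IsEdge (prodSimplex n) e → vertex o ∈ e →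
        ∃ i, e = segment ℝ (vertex o) (vertex o + t i • ivec (u i)) := by
  have hseg : ∀ i,
      segment ℝ (vertex o) (vertex o + (1 : ℝ) • ivec fun j => vertexSwapMatrix o j i) =
        vertexSwap o '' segment ℝ 0 (stdVec i) := fun i => by
    rw [image_segment, vertexSwap_zero, vertexSwap_stdVec, one_smul]
  refine ⟨fun i j => vertexSwapMatrix o j i, fun _ => 1, ?_, fun _ => one_pos, fun i => ?_,
    fun e he hve => ?_⟩
  · rw [← Matrix.det_transpose]
    exact isUnit_det_vertexSwapMatrix o
  · rw [hseg]
    exact (isEdge_segment_zero_stdVec i).image_of_involutive (involutive_vertexSwap o)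
      (mapsTo_vertexSwap ho)
  · obtain ⟨i, hi⟩ := exists_eq_segment_zero_stdVec
      (he.image_of_involutive (involutive_vertexSwap o) (mapsTo_vertexSwap ho))
      ⟨vertex o, hve, by rw [← vertexSwap_zero, involutive_vertexSwap]⟩
    refine ⟨i, ?_⟩
    rw [hseg, ← hi, ← Set.image_comp, (involutive_vertexSwap o).comp_self, Set.image_id]

theorem isDelzant_prodSimplex : IsDelzant (prodSimplex n) := by
  refine ⟨isCompact_prodSimplex, convex_prodSimplex, interior_prodSimplex_nonempty, ?_,
    ⟨0, zero_mem_extremePoints⟩, ?_⟩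
  · rw [extremePoints_prodSimplex]
    exact (vertexIndex n).finite_toSet.image _
  · rw [extremePoints_prodSimplex]
    rintro _ ⟨o, ho, rfl⟩
    exact exists_delzant_basis_at_vertex ho

theorem form_ne_zero {x : Pt n} {k : Fin n ⊕ Bool} (hk : k ∈ tightSet (form n) bound x) :
    form n k ≠ 0 := by
  intro h
  rcases k with i | b
  · simpa [stdVec] using LinearMap.congr_fun h (stdVec i)
  · have := mem_tightSet_inr.1 hk
    rw [← form_inr_apply, h] at this
    exact zero_ne_one this

theorem exists_form_eq_zero_form_ne_zero {x : Pt n} {k k' : Fin n ⊕ Bool}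
    (hk : k ∈ tightSet (form n) bound x) (hk' : k' ∈ tightSet (form n) bound x)
    (hne : k ≠ k') :
    ∃ z, form n k z = 0 ∧ form n k' z ≠ 0 := by
  rcases k with i | b <;> rcases k' with j | b'
  · refine ⟨stdVec j, ?_⟩
    simp [stdVec, show i ≠ j from fun h => hne (h ▸ rfl)]
  · obtain ⟨q, hq, hxq⟩ := exists_pos_of_mem_tightSet_inr hk'
    have hqi : i ≠ q := by rintro rfl; exact hxq.ne' (mem_tightSet_inl.1 hk)
    exact ⟨stdVec q, by simp [stdVec, hqi, hq]⟩
  · obtain ⟨q, hq, hxq⟩ := exists_pos_of_mem_tightSet_inr hk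
    have hqj : q ≠ j := by rintro rfl; exact hxq.ne' (mem_tightSet_inl.1 hk')
    by_cases hj : side j = b
    · exact ⟨stdVec j - stdVec q, by simp [Finset.sum_sub_distrib, sum_block_stdVec, hj, hq],
        by simp [stdVec, hqj.symm]⟩
    · exact ⟨stdVec j, by simp [sum_block_stdVec, hj], by simp [stdVec]⟩
  · obtain ⟨q, hq, -⟩ := exists_pos_of_mem_tightSet_inr hk'
    have hbb' : b ≠ b' := fun h => hne (h ▸ rfl)
    exact ⟨stdVec q, by simp [sum_block_stdVec, hq, hbb'.symm]⟩

theorem finrank_vectorSpan_lt_of_forall_mem_tightSet {F : Set (Pt n)} {x : Pt n} (hx : x ∈ F)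
    {k k' : Fin n ⊕ Bool} (hne : k ≠ k')
    (hF : ∀ y ∈ F, k ∈ tightSet (form n) bound y ∧ k' ∈ tightSet (form n) bound y) :
    finrank ℝ (vectorSpan ℝ F) < n - 1 := by
  obtain ⟨z, hz, hz'⟩ := exists_form_eq_zero_form_ne_zero (hF x hx).1 (hF x hx).2 hne
  have hle : vectorSpan ℝ F ≤ LinearMap.ker (form n k) ⊓ LinearMap.ker (form n k') :=
    le_inf (vectorSpan_le_ker_of_forall_eq _ fun y hy => (hF y hy).1)
      (vectorSpan_le_ker_of_forall_eq _ fun y hy => (hF y hy).2)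
  simpa using (Submodule.finrank_mono hle).trans_lt
    (finrank_ker_inf_ker_lt (form_ne_zero (hF x hx).1) hz hz')

theorem vectorSpan_prodSimplex : vectorSpan ℝ (prodSimplex n) = ⊤ :=
  eq_top_of_forall_stdVec_mem fun i => by
    simpa using vsub_mem_vectorSpan ℝ (stdVec_mem_prodSimplex i) zero_mem_extremePoints.1

def facet (n : ℕ) (k : Fin n ⊕ Bool) : Set (Pt n) := polyhedronFace (form n) bound {k}

theorem mem_facet {k : Fin n ⊕ Bool} {x : Pt n} :
    x ∈ facet n k ↔ x ∈ prodSimplex n ∧ k ∈ tightSet (form n) bound x := by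
  simp [facet, polyhedronFace, prodSimplex_eq_polyhedron]

theorem stdVec_mem_facet_inl {i j : Fin n} (hij : j ≠ i) : stdVec j ∈ facet n (.inl i) :=
  mem_facet.2 ⟨stdVec_mem_prodSimplex j, by simp [stdVec, hij.symm]⟩

theorem stdVec_mem_facet_inr {b : Bool} {j : Fin n} (hj : side j = b) :
    stdVec j ∈ facet n (.inr b) :=
  mem_facet.2 ⟨stdVec_mem_prodSimplex j, by simp [sum_block_stdVec, hj]⟩

theorem stdVec_add_stdVec_mem_facet_inr {b : Bool} {q j : Fin n} (hq : side q = b)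
    (hj : side j ≠ b) : stdVec q + stdVec j ∈ facet n (.inr b) := by
  refine mem_facet.2 ⟨mem_prodSimplex.2 ⟨fun i => ?_, fun b' => ?_⟩, ?_⟩
  · simp only [Pi.add_apply, stdVec]; split_ifs <;> norm_num
  · simp only [Pi.add_apply, Finset.sum_add_distrib, sum_block_stdVec]
    split_ifs <;> simp_all
  · simp [Finset.sum_add_distrib, sum_block_stdVec, hq, hj]

theorem exists_vectorSpan_facet_sup_span_eq_top (hn : 2 ≤ n) (k : Fin n ⊕ Bool) :
    ∃ w, vectorSpan ℝ (facet n k) ⊔ ℝ ∙ w = ⊤ := by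
  rcases k with i | b
  · refine ⟨stdVec i, eq_top_of_forall_stdVec_mem fun j => ?_⟩
    by_cases hj : j = i
    · exact Submodule.mem_sup_right (hj ▸ Submodule.mem_span_singleton_self _)
    · refine Submodule.mem_sup_left ?_
      simpa using vsub_mem_vectorSpan ℝ (stdVec_mem_facet_inl hj)
        (mem_facet.2 ⟨zero_mem_extremePoints.1, by simp⟩ : (0 : Pt n) ∈ facet n (.inl i))
  · obtain ⟨q, hq⟩ := block_nonempty hn b
    rw [mem_block] at hq
    refine ⟨stdVec q, eq_top_of_forall_stdVec_mem fun j => ?_⟩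
    by_cases hj : side j = b
    · exact Submodule.mem_sup.2 ⟨stdVec j - stdVec q, vsub_mem_vectorSpan ℝ
        (stdVec_mem_facet_inr hj) (stdVec_mem_facet_inr hq), stdVec q,
        Submodule.mem_span_singleton_self _, sub_add_cancel _ _⟩
    · refine Submodule.mem_sup_left ?_
      simpa using vsub_mem_vectorSpan ℝ (stdVec_add_stdVec_mem_facet_inr hq hj)
        (stdVec_mem_facet_inr hq)

theorem facet_nonempty (hn : 2 ≤ n) (k : Fin n ⊕ Bool) : (facet n k).Nonempty := by
  rcases k with i | b
  · exact ⟨0, mem_facet.2 ⟨zero_mem_extremePoints.1, by simp⟩⟩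
  · obtain ⟨q, hq⟩ := block_nonempty hn b
    exact ⟨stdVec q, stdVec_mem_facet_inr (mem_block.1 hq)⟩

theorem isFacet_facet (hn : 2 ≤ n) (k : Fin n ⊕ Bool) :
    IsFacet (prodSimplex n) (facet n k) := by
  obtain ⟨x, hx⟩ := facet_nonempty hn k
  refine ⟨prodSimplex_eq_polyhedron ▸ isExtreme_polyhedronFace _, convex_polyhedronFace _,
    isClosed_polyhedronFace _, ⟨x, hx⟩, ?_⟩
  rw [direction_affineSpan]
  obtain ⟨w, hw⟩ := exists_vectorSpan_facet_sup_span_eq_top hn k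
  have hle := (finrank_sub_one_le_of_sup_span_singleton_eq_top hw)
  have hker := Submodule.finrank_mono (vectorSpan_le_ker_of_forall_eq (form n k)
    fun y hy => (mem_facet.1 hy).2)
  have := Module.Dual.finrank_ker_add_one_of_ne_zero (form_ne_zero (mem_facet.1 hx).2)
  simp only [finrank_fin_fun] at hle this
  exact le_antisymm (hker.trans (by omega)) hle

theorem IsFacet.exists_eq_facet (hn : 0 < n) {F : Set (Pt n)} (hF : IsFacet (prodSimplex n) F) :
    ∃ k, F = facet n k := by
  obtain ⟨hext, hconv, -, hne, hdim⟩ := hF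
  rw [direction_affineSpan] at hdim
  rw [prodSimplex_eq_polyhedron] at hext
  obtain ⟨x, hx, hFx⟩ := hext.eq_polyhedronFace hconv hne
  rcases (tightSet (form n) bound x).eq_empty_or_nonempty with hT | ⟨k, hk⟩
  · have hFP : F = prodSimplex n := by
      rw [hFx, hT, prodSimplex_eq_polyhedron]; simp [polyhedronFace]
    rw [hFP, vectorSpan_prodSimplex, finrank_top, finrank_fin_fun] at hdim
    omega
  · refine ⟨k, ?_⟩
    by_cases hsub : tightSet (form n) bound x ⊆ {k}
    · rw [hFx, Set.Subset.antisymm hsub (Set.singleton_subset_iff.2 hk)]; rfl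
    · obtain ⟨k', hk', hk'k⟩ := Set.not_subset.1 hsub
      have := finrank_vectorSpan_lt_of_forall_mem_tightSet hx (Ne.symm hk'k) fun y hy => by
        rw [hFx] at hy; exact ⟨hy.2 hk, hy.2 hk'⟩
      omega

theorem injective_facet (hn : 2 ≤ n) : Function.Injective (facet n) := by
  intro k k' h
  by_contra hne
  obtain ⟨x, hx⟩ := facet_nonempty hn k
  have hdim := (isFacet_facet hn k).2.2.2.2
  rw [direction_affineSpan] at hdim
  exact (finrank_vectorSpan_lt_of_forall_mem_tightSet hx hne fun y hy =>
    ⟨(mem_facet.1 hy).2, (mem_facet.1 (h ▸ hy)).2⟩).ne hdim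

theorem setOf_isFacet_prodSimplex (hn : 2 ≤ n) :
    {F | IsFacet (prodSimplex n) F} = Set.range (facet n) :=
  Set.Subset.antisymm (fun _ hF => (IsFacet.exists_eq_facet (by omega) hF).imp fun _ h => h.symm)
    (Set.range_subset_iff.2 (isFacet_facet hn))

end ProdSimplex

/-- For `n ≥ 2`, the product of standard simplices of dimensions `⌊n/2⌋`
and `⌈n/2⌉` is an `n`-dimensional Delzant polytope with exactly `⌊(n+2)/2⌋·⌈(n+2)/2⌉`
vertices and exactly `n + 2` facets; in particular, the vertex bound in the statement
"a Delzant polytope with at least `⌊(n+2)/2⌋·⌈(n+2)/2⌉ + 1` vertices has at least `n + 3`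
facets" is sharp. -/
theorem prodSimplex_delzant_card_vertices_card_facets (n : ℕ) (hn : 2 ≤ n) :
    IsDelzant (prodSimplex n) ∧
    (Set.extremePoints ℝ (prodSimplex n)).ncard = (n + 2) / 2 * ((n + 3) / 2) ∧
    {F : Set (Pt n) | IsFacet (prodSimplex n) F}.Finite ∧
    {F : Set (Pt n) | IsFacet (prodSimplex n) F}.ncard = n + 2 := by
  rw [ProdSimplex.setOf_isFacet_prodSimplex hn, ProdSimplex.ncard_extremePoints_prodSimplex,
    Set.ncard_range_of_injective (ProdSimplex.injective_facet hn),
    show (n + 2) / 2 = n / 2 + 1 by omega, show (n + 3) / 2 = n - n / 2 + 1 by omega]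
  exact ⟨ProdSimplex.isDelzant_prodSimplex, rfl, Set.finite_range _, by simp⟩
end
end
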